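/- arXiv:2508.07581 — 4 statements merged into one kernel-verified Lean document; each statement's English description precedes it below -/
import Mathlib

section
/- For every C¹ function f : ℝ^D → ℝ and every x ∈ ℝ^D, the response after τ steps is given in closed form by r_τ(f)(x) = Σ_{i=0}^{τ−1} ⟨∇(f ∘ F_{τ−1} ∘ ⋯ ∘ F_{i+1})(F^{i+1}(x)), χ_i(F^i(x))⟩, where for i = τ−1 the composition f ∘ F_{τ−1} ∘ ⋯ ∘ F_{i+1} is interpreted as f itself. -/
open scoped RealInnerProductSpace

/-- The perturbed composition `F^t_ε`: `F^0_ε = id`, `F^{t+1}_ε = (F_t + ε χ_t) ∘ F^t_ε`. -/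
noncomputable def perturbedIter (D : ℕ)
    (F χ : ℕ → EuclideanSpace ℝ (Fin D) → EuclideanSpace ℝ (Fin D)) (ε : ℝ) :
    ℕ → EuclideanSpace ℝ (Fin D) → EuclideanSpace ℝ (Fin D)
  | 0 => id
  | (t + 1) => (fun x => F t x + ε • χ t x) ∘ perturbedIter D F χ ε t

/-- The composition `F_{a+k-1} ∘ ⋯ ∘ F_a` (the identity when `k = 0`). -/
noncomputable def tailComp (D : ℕ)
    (F : ℕ → EuclideanSpace ℝ (Fin D) → EuclideanSpace ℝ (Fin D)) (a : ℕ) :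
    ℕ → EuclideanSpace ℝ (Fin D) → EuclideanSpace ℝ (Fin D)
  | 0 => id
  | (k + 1) => F (a + k) ∘ tailComp D F a k

/-
The curve `ε ↦ F^t_ε x` has at `ε = 0` the velocity `v_t` solving the variational equation
`v_0 = 0`, `v_{t+1} = DF_t(F^t x) v_t + χ_t(F^t x)`. Unrolling this linear recursion (variation
of constants) expresses `Df(F^τ x) v_τ` as the sum, over the step `i` at which `χ_i` enters, of
`χ_i(F^i x)` pushed forward by the derivative of `f ∘ F_{τ-1} ∘ ⋯ ∘ F_{i+1}` at `F^{i+1} x`.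
-/

theorem hasDerivAt_sub_smul_of_continuousAt {𝕜 E : Type*} [NontriviallyNormedField 𝕜]
    [NormedAddCommGroup E] [NormedSpace 𝕜 E] {c : 𝕜 → E} {a : 𝕜} (hc : ContinuousAt c a) :
    HasDerivAt (fun y => (y - a) • c y) (c a) a := by
  rw [hasDerivAt_iff_tendsto_slope]
  refine hc.continuousWithinAt.tendsto.congr' (eventually_nhdsWithin_of_forall fun y hy => ?_)
  have hy : y - a ≠ 0 := sub_ne_zero.2 hy
  simp [slope_def_module, smul_smul, inv_mul_cancel₀ hy]

section Variational

variable {D : ℕ} (F χ : ℕ → EuclideanSpace ℝ (Fin D) → EuclideanSpace ℝ (Fin D))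
  (x : EuclideanSpace ℝ (Fin D))

theorem perturbedIter_zero_succ (t : ℕ) :
    perturbedIter D F χ 0 (t + 1) x = F t (perturbedIter D F χ 0 t x) := by
  simp [perturbedIter]

theorem tailComp_sub_eq_comp {i t : ℕ} (hi : i < t) :
    tailComp D F (i + 1) (t - i) = F t ∘ tailComp D F (i + 1) (t - 1 - i) := by
  obtain ⟨k, rfl⟩ := Nat.exists_eq_add_of_lt hi
  rw [show i + k + 1 - i = k + 1 by omega, show i + k + 1 - 1 - i = k by omega,
    Nat.add_right_comm i k 1]
  rfl

noncomputable def perturbedIterVelocity : ℕ → EuclideanSpace ℝ (Fin D)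
  | 0 => 0
  | (t + 1) => fderiv ℝ (F t) (perturbedIter D F χ 0 t x) (perturbedIterVelocity t)
      + χ t (perturbedIter D F χ 0 t x)

theorem hasDerivAt_perturbedIter {t : ℕ} (hF : ∀ s < t, Differentiable ℝ (F s))
    (hχ : ∀ s < t, Continuous (χ s)) :
    HasDerivAt (fun ε : ℝ => perturbedIter D F χ ε t x) (perturbedIterVelocity F χ x t) 0 := by
  induction t with
  | zero => exact hasDerivAt_const 0 x
  | succ t ih =>
    have hprev := ih (fun s hs => hF s (by omega)) (fun s hs => hχ s (by omega))
    have hdrift := ((hF t t.lt_succ_self).differentiableAt.hasFDerivAt).comp_hasDerivAt 0 hprev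
    have hkick := hasDerivAt_sub_smul_of_continuousAt
      ((hχ t t.lt_succ_self).continuousAt.comp hprev.continuousAt)
    simp only [sub_zero] at hkick
    exact hdrift.add hkick

theorem fderiv_apply_perturbedIterVelocity {t : ℕ} (hF : ∀ s < t, Differentiable ℝ (F s))
    {g : EuclideanSpace ℝ (Fin D) → ℝ} (hg : Differentiable ℝ g) :
    fderiv ℝ g (perturbedIter D F χ 0 t x) (perturbedIterVelocity F χ x t)
      = ∑ i ∈ Finset.range t,
          fderiv ℝ (g ∘ tailComp D F (i + 1) (t - 1 - i)) (perturbedIter D F χ 0 (i + 1) x)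
            (χ i (perturbedIter D F χ 0 i x)) := by
  induction t generalizing g with
  | zero => simp [perturbedIterVelocity]
  | succ t ih =>
    have hFt := hF t t.lt_succ_self
    have hpull : fderiv ℝ g (perturbedIter D F χ 0 (t + 1) x)
          (fderiv ℝ (F t) (perturbedIter D F χ 0 t x) (perturbedIterVelocity F χ x t))
        = fderiv ℝ (g ∘ F t) (perturbedIter D F χ 0 t x) (perturbedIterVelocity F χ x t) := by
      rw [fderiv_comp _ hg.differentiableAt hFt.differentiableAt, perturbedIter_zero_succ]
      rfl
    rw [perturbedIterVelocity, map_add, hpull,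
      ih (fun s hs => hF s (by omega)) (hg.comp hFt), Finset.sum_range_succ]
    congr 1
    · refine Finset.sum_congr rfl fun i hi => ?_
      rw [Nat.add_sub_cancel, tailComp_sub_eq_comp F (Finset.mem_range.1 hi)]
      rfl
    · rw [show t + 1 - 1 - t = 0 by omega]
      rfl

end Variational

/-- For every C¹ function `f` and every `x`, the response after `τ` steps,
`r_τ(f)(x) := (d/dε)|₀ f(F^τ_ε(x))`, exists and equals the closed form
`Σ_{i=0}^{τ-1} ⟨∇(f ∘ F_{τ-1} ∘ ⋯ ∘ F_{i+1})(F^{i+1}(x)), χ_i(F^i(x))⟩`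
(with the composition interpreted as `f` itself when `i = τ-1`). -/
theorem statement2 (D τ : ℕ)
    (F χ : ℕ → EuclideanSpace ℝ (Fin D) → EuclideanSpace ℝ (Fin D))
    (hF : ∀ t < τ, ContDiff ℝ 1 (F t)) (hχ : ∀ t < τ, Continuous (χ t))
    (f : EuclideanSpace ℝ (Fin D) → ℝ) (hf : ContDiff ℝ 1 f)
    (x : EuclideanSpace ℝ (Fin D)) :
    HasDerivAt (fun ε : ℝ => f (perturbedIter D F χ ε τ x))
      (∑ i ∈ Finset.range τ,
        ⟪gradient (f ∘ tailComp D F (i + 1) (τ - 1 - i)) (perturbedIter D F χ 0 (i + 1) x),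
          χ i (perturbedIter D F χ 0 i x)⟫)
      0 := by
  have hF' : ∀ t < τ, Differentiable ℝ (F t) := fun t ht => (hF t ht).differentiable one_ne_zero
  have hf' : Differentiable ℝ f := hf.differentiable one_ne_zero
  have hcurve := hasDerivAt_perturbedIter F χ x hF' hχ
  have hchain := hf'.differentiableAt.hasFDerivAt.comp_hasDerivAt 0 hcurve
  rw [fderiv_apply_perturbedIterVelocity F χ x hF' hf'] at hchain
  simp only [inner_gradient_left]
  exact hchain
end

section
/- Let F : ℝ^D → ℝ^D be a C² diffeomorphism, let ρ₀ : ℝ^D → ℝ be a nonnegative C¹ density with compact support, let χ : ℝ^D → ℝ^D be a C¹ vector field, and define the pushforward density ρ₁(y) := ρ₀(F⁻¹(y)) / |det DF(F⁻¹(y))| and the transported perturbation field χ̃ := χ ∘ F⁻¹. Then for every C¹ function f : ℝ^D → ℝ, the map ε ↦ ∫ f(F(x) + ε χ(x)) ρ₀(x) dx is differentiable at ε = 0 with derivative equal to −∫_{ℝ^D} f(y) div(ρ₁ χ̃)(y) dy; in particular, the first-order response of the predicted density has Lebesgue density −div(ρ₁ χ̃), which vanishes on any open set on which ρ₁ vanishes.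 -/
open MeasureTheory

/-- The divergence `div V = Σ_j ∂_j V_j` of a vector field on `ℝ^D`. -/
noncomputable def divergence (D : ℕ)
    (V : EuclideanSpace ℝ (Fin D) → EuclideanSpace ℝ (Fin D))
    (x : EuclideanSpace ℝ (Fin D)) : ℝ :=
  ∑ j : Fin D, fderiv ℝ (fun y => V y j) x (EuclideanSpace.single j 1)

/-!
Differentiating under the integral sign gives the derivative `∫ Df(F x)(χ x) ρ₀(x) dx`. The
substitution `y = F x` turns it into `∫ Df(y)(χ̃ y) ρ₁(y) dy`, and a coordinatewise integration by
parts moves the derivative onto `ρ₁ χ̃`, which is C¹ with compact support because `|det DF|` is C¹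
and never vanishes. The divergence only depends on the germ of the field, so it vanishes on open
sets where `ρ₁` does.
-/

open Filter Topology Set Function

theorem ContinuousLinearMap.contDiff_det {𝕜 E : Type*} [NontriviallyNormedField 𝕜]
    [CompleteSpace 𝕜] [NormedAddCommGroup E] [NormedSpace 𝕜 E] [FiniteDimensional 𝕜 E]
    {n : WithTop ℕ∞} : ContDiff 𝕜 n fun f : E →L[𝕜] E => f.det := by
  classical
  let b := Module.finBasis 𝕜 E
  have entry (i j) : ContDiff 𝕜 n fun f : E →L[𝕜] E => LinearMap.toMatrix b b f i j :=
    (LinearMap.toContinuousLinearMap ((LinearMap.proj j ∘ₗ LinearMap.proj i) ∘ₗ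
      (LinearMap.toMatrix b b).toLinearMap ∘ₗ ContinuousLinearMap.coeLM 𝕜)).contDiff
  simp_rw [ContinuousLinearMap.det, ← LinearMap.det_toMatrix b, Matrix.det_apply,
    Units.smul_def, zsmul_eq_mul]
  exact ContDiff.sum fun σ _ => contDiff_const.mul (contDiff_prod fun i _ => entry _ _)

section Diffeomorphism

variable {E : Type*} [NormedAddCommGroup E] [NormedSpace ℝ E]

/-- The density of the push-forward of `ρ dx` under `F`, when `G` is the inverse of `F`. -/
noncomputable def pushforwardDensity (F G : E → E) (ρ : E → ℝ) (y : E) : ℝ :=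
  ρ (G y) / |(fderiv ℝ F (G y)).det|

theorem HasCompactSupport.pushforwardDensity {F G : E → E} {ρ : E → ℝ}
    (hρ : HasCompactSupport ρ) (hF : Continuous F) (hFG : RightInverse G F) :
    HasCompactSupport (pushforwardDensity F G ρ) := by
  refine HasCompactSupport.intro (hρ.image hF) fun y hy => ?_
  have : ρ (G y) = 0 := by
    by_contra h
    exact hy ⟨G y, subset_tsupport ρ h, hFG y⟩
  simp [_root_.pushforwardDensity, this]

theorem det_fderiv_ne_zero_of_leftInverse {F G : E → E} {x : E}
    (hF : DifferentiableAt ℝ F x) (hG : DifferentiableAt ℝ G (F x)) (hGF : LeftInverse G F) :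
    (fderiv ℝ F x).det ≠ 0 := by
  have hcomp : (fderiv ℝ G (F x)).comp (fderiv ℝ F x) = ContinuousLinearMap.id ℝ E := by
    rw [← fderiv_comp x hG hF, hGF.comp_eq_id, fderiv_id]
  have hdet : (fderiv ℝ G (F x)).det * (fderiv ℝ F x).det = 1 := by
    simpa [LinearMap.det_comp] using
      congrArg (fun L : E →L[ℝ] E => LinearMap.det (L : E →ₗ[ℝ] E)) hcomp
  exact right_ne_zero_of_mul_eq_one hdet

variable [FiniteDimensional ℝ E]

theorem contDiff_pushforwardDensity {F G : E → E} {ρ : E → ℝ} {n : ℕ∞}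
    (hF : ContDiff ℝ (n + 1) F) (hG : ContDiff ℝ n G) (hρ : ContDiff ℝ n ρ) (hn : n ≠ 0)
    (hGF : LeftInverse G F) :
    ContDiff ℝ n (pushforwardDensity F G ρ) := by
  have hdet : ContDiff ℝ n fun x => (fderiv ℝ F x).det :=
    ContinuousLinearMap.contDiff_det.comp (hF.fderiv_right le_rfl)
  have hne (x : E) : (fderiv ℝ F x).det ≠ 0 :=
    det_fderiv_ne_zero_of_leftInverse ((hF.differentiable (by simp)) x)
      (hG.differentiable (mod_cast hn) _) hGF
  exact (hρ.comp hG).div ((hdet.abs hne).comp hG) fun y => abs_ne_zero.2 (hne (G y))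

variable [MeasurableSpace E] [BorelSpace E] (μ : Measure E) [μ.IsAddHaarMeasure]

theorem integral_mul_pushforwardDensity {F G : E → E} (hF : Differentiable ℝ F)
    (hG : Differentiable ℝ G) (hGF : LeftInverse G F) (hFG : RightInverse G F)
    (ρ g : E → ℝ) :
    ∫ y, g y * pushforwardDensity F G ρ y ∂μ = ∫ x, g (F x) * ρ x ∂μ := by
  have hcov := integral_image_eq_integral_abs_det_fderiv_smul μ MeasurableSet.univ
    (fun x _ => (hF x).hasFDerivAt.hasFDerivWithinAt) hGF.injective.injOn
    (fun y => g y * pushforwardDensity F G ρ y)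
  rw [image_univ, hFG.surjective.range_eq, Measure.restrict_univ] at hcov
  rw [hcov]
  congr 1 with x
  have hne := abs_ne_zero.2 (det_fderiv_ne_zero_of_leftInverse (hF x) (hG (F x)) hGF)
  simp only [_root_.pushforwardDensity, hGF x, smul_eq_mul]
  field_simp

end Diffeomorphism

theorem hasDerivAt_integral_comp_add_smul {X E : Type*} [TopologicalSpace X]
    [MeasurableSpace X] [OpensMeasurableSpace X] {μ : Measure X} [IsFiniteMeasureOnCompacts μ]
    [NormedAddCommGroup E] [NormedSpace ℝ E] {f : E → ℝ} {G χ : X → E} {ρ : X → ℝ}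
    (hf : ContDiff ℝ 1 f) (hG : Continuous G) (hχ : Continuous χ) (hρ : Continuous ρ)
    (hρc : HasCompactSupport ρ) :
    HasDerivAt (fun ε : ℝ => ∫ x, f (G x + ε • χ x) * ρ x ∂μ)
      (∫ x, fderiv ℝ f (G x) (χ x) * ρ x ∂μ) 0 := by
  set φ : ℝ × X → ℝ := fun p => fderiv ℝ f (G p.2 + p.1 • χ p.2) (χ p.2)
  have hφ : Continuous φ := by
    have := hf.continuous_fderiv one_ne_zero
    fun_prop
  obtain ⟨C, hC⟩ := (isCompact_Icc.prod hρc).exists_bound_of_continuousOn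
    (s := Icc (-1 : ℝ) 1 ×ˢ tsupport ρ) hφ.continuousOn
  have hbound (x : X) (ε : ℝ) (hε : ε ∈ Icc (-1 : ℝ) 1) : ‖φ (ε, x) * ρ x‖ ≤ C * ‖ρ x‖ := by
    rcases eq_or_ne (ρ x) 0 with h | h
    · simp [h]
    · rw [norm_mul]
      exact mul_le_mul_of_nonneg_right (hC _ ⟨hε, subset_tsupport ρ h⟩) (norm_nonneg _)
  have hderiv (x : X) (ε : ℝ) :
      HasDerivAt (fun ε : ℝ => f (G x + ε • χ x) * ρ x) (φ (ε, x) * ρ x) ε := by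
    have hline : HasDerivAt (fun ε : ℝ => G x + ε • χ x) (χ x) ε := by
      simpa using ((hasDerivAt_id ε).smul_const (χ x)).const_add (G x)
    exact (((hf.differentiable one_ne_zero) _).hasFDerivAt.comp_hasDerivAt ε hline).mul_const _
  have hintegrand (ε : ℝ) : Continuous fun x => f (G x + ε • χ x) * ρ x :=
    (hf.continuous.comp (by fun_prop)).mul hρ
  simpa [φ] using (hasDerivAt_integral_of_dominated_loc_of_deriv_le (μ := μ)
    (Icc_mem_nhds (by norm_num : (-1 : ℝ) < 0) one_pos)
    (Eventually.of_forall fun ε => (hintegrand ε).aestronglyMeasurable)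
    ((hintegrand 0).integrable_of_hasCompactSupport hρc.mul_left)
    (hφ.comp (Continuous.prodMk_right 0) |>.mul hρ).aestronglyMeasurable
    (Eventually.of_forall fun x ε hε => hbound x ε hε)
    ((hρ.integrable_of_hasCompactSupport hρc).norm.const_mul C)
    (Eventually.of_forall fun x ε _ => hderiv x ε)).2

section Divergence

variable {D : ℕ}

theorem divergence_eq_zero_of_eventuallyEq_zero
    {V : EuclideanSpace ℝ (Fin D) → EuclideanSpace ℝ (Fin D)} {y : EuclideanSpace ℝ (Fin D)}
    (hV : V =ᶠ[𝓝 y] 0) : divergence D V y = 0 := by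
  refine Finset.sum_eq_zero fun j _ => ?_
  have hVj : (fun z => V z j) =ᶠ[𝓝 y] fun _ => 0 := hV.mono fun z hz => by simp [hz]
  simp [hVj.fderiv_eq]

theorem integral_mul_divergence_eq_neg_integral_fderiv {f : EuclideanSpace ℝ (Fin D) → ℝ}
    {W : EuclideanSpace ℝ (Fin D) → EuclideanSpace ℝ (Fin D)} (hf : ContDiff ℝ 1 f)
    (hW : ContDiff ℝ 1 W) (hWc : HasCompactSupport W) :
    ∫ y, f y * divergence D W y = -∫ y, fderiv ℝ f y (W y) := by
  let e (j : Fin D) : EuclideanSpace ℝ (Fin D) := EuclideanSpace.single j 1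
  have hWj (j : Fin D) : ContDiff ℝ 1 fun y => W y j :=
    (EuclideanSpace.proj j : EuclideanSpace ℝ (Fin D) →L[ℝ] ℝ).contDiff.comp hW
  have hWjc (j : Fin D) : HasCompactSupport fun y => W y j :=
    hWc.comp_left (g := fun v : EuclideanSpace ℝ (Fin D) => v j) rfl
  have hdf : Continuous (fderiv ℝ f) := hf.continuous_fderiv one_ne_zero
  have hint_df (j : Fin D) : Integrable fun y => fderiv ℝ f y (e j) * W y j :=
    ((hdf.clm_apply continuous_const).mul (hWj j).continuous).integrable_of_hasCompactSupport
      (hWjc j).mul_left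
  have hint_dW (j : Fin D) : Integrable fun y => f y * fderiv ℝ (fun z => W z j) y (e j) :=
    (hf.continuous.mul (((hWj j).continuous_fderiv one_ne_zero).clm_apply
      continuous_const)).integrable_of_hasCompactSupport ((hWjc j).fderiv_apply ℝ _).mul_left
  have hparts (j : Fin D) :
      ∫ y, f y * fderiv ℝ (fun z => W z j) y (e j) = -∫ y, fderiv ℝ f y (e j) * W y j :=
    integral_mul_fderiv_eq_neg_fderiv_mul_of_integrable (hint_df j) (hint_dW j)
      ((hf.continuous.mul (hWj j).continuous).integrable_of_hasCompactSupport (hWjc j).mul_left)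
      (fun x _ => hf.differentiable one_ne_zero x)
      (fun x _ => (hWj j).differentiable one_ne_zero x)
  have hexpand (y : EuclideanSpace ℝ (Fin D)) :
      fderiv ℝ f y (W y) = ∑ j, fderiv ℝ f y (e j) * W y j := by
    conv_lhs => rw [← (EuclideanSpace.basisFun (Fin D) ℝ).sum_repr (W y)]
    simp [e, mul_comm]
  calc ∫ y, f y * divergence D W y
      = ∑ j, ∫ y, f y * fderiv ℝ (fun z => W z j) y (e j) := by
        simp_rw [divergence, Finset.mul_sum]
        exact integral_finsetSum _ fun j _ => hint_dW j
    _ = -∫ y, fderiv ℝ f y (W y) := by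
        simp_rw [hparts, hexpand, Finset.sum_neg_distrib]
        rw [integral_finsetSum _ fun j _ => hint_df j]

end Divergence

theorem statement5_general (D : ℕ)
    (F Finv : EuclideanSpace ℝ (Fin D) → EuclideanSpace ℝ (Fin D))
    (hF : ContDiff ℝ 2 F) (hFinv : ContDiff ℝ 2 Finv)
    (hleft : ∀ x, Finv (F x) = x) (hright : ∀ y, F (Finv y) = y)
    (ρ₀ : EuclideanSpace ℝ (Fin D) → ℝ)
    (hρ₀ : ContDiff ℝ 1 ρ₀) (hρ₀supp : HasCompactSupport ρ₀)
    (χ : EuclideanSpace ℝ (Fin D) → EuclideanSpace ℝ (Fin D)) (hχ : ContDiff ℝ 1 χ)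
    (ρ₁ : EuclideanSpace ℝ (Fin D) → ℝ)
    (hρ₁ : ∀ y, ρ₁ y =
      ρ₀ (Finv y) / |LinearMap.det (fderiv ℝ F (Finv y) :
        EuclideanSpace ℝ (Fin D) →ₗ[ℝ] EuclideanSpace ℝ (Fin D))|)
    (f : EuclideanSpace ℝ (Fin D) → ℝ) (hf : ContDiff ℝ 1 f) :
    HasDerivAt (fun ε : ℝ => ∫ x, f (F x + ε • χ x) * ρ₀ x)
      (-∫ y, f y * divergence D (fun z => ρ₁ z • χ (Finv z)) y) 0 ∧
    ∀ U : Set (EuclideanSpace ℝ (Fin D)), IsOpen U → (∀ y ∈ U, ρ₁ y = 0) →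
      ∀ y ∈ U, divergence D (fun z => ρ₁ z • χ (Finv z)) y = 0 := by
  obtain rfl : ρ₁ = pushforwardDensity F Finv ρ₀ := funext hρ₁
  refine ⟨?_, fun U hU hρ₁U y hy => divergence_eq_zero_of_eventuallyEq_zero <|
    eventually_of_mem (hU.mem_nhds hy) fun z hz => by simp [hρ₁U z hz]⟩
  have hFinv₁ : ContDiff ℝ 1 Finv := hFinv.of_le one_le_two
  have hρ₁C : ContDiff ℝ 1 (pushforwardDensity F Finv ρ₀) :=
    contDiff_pushforwardDensity (n := 1) hF hFinv₁ hρ₀ one_ne_zero hleft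
  have hρ₁c : HasCompactSupport (pushforwardDensity F Finv ρ₀) :=
    hρ₀supp.pushforwardDensity hF.continuous hright
  rw [integral_mul_divergence_eq_neg_integral_fderiv (W := fun z => _ • χ (Finv z)) hf
    (hρ₁C.smul (hχ.comp hFinv₁)) hρ₁c.smul_right, neg_neg]
  simp only [map_smul, smul_eq_mul, mul_comm (pushforwardDensity F Finv ρ₀ _)]
  rw [integral_mul_pushforwardDensity volume (hF.differentiable two_ne_zero)
    (hFinv.differentiable two_ne_zero) hleft hright]
  simpa only [hleft] using hasDerivAt_integral_comp_add_smul hf hF.continuous hχ.continuous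
    hρ₀.continuous hρ₀supp

/-- Let `F` be a C² diffeomorphism of `ℝ^D` (with inverse `Finv`), `ρ₀` a
nonnegative C¹ density with compact support, `χ` a C¹ vector field, and let
`ρ₁(y) = ρ₀(F⁻¹ y)/|det DF(F⁻¹ y)|` be the pushforward density and `χ̃ = χ ∘ F⁻¹` the
transported perturbation field. Then for every C¹ function `f`, the map
`ε ↦ ∫ f(F x + ε χ x) ρ₀(x) dx` is differentiable at `ε = 0` with derivative
`−∫ f(y) div(ρ₁ χ̃)(y) dy`; moreover `div(ρ₁ χ̃)` vanishes on any open set where `ρ₁` vanishes. -/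
theorem statement5 (D : ℕ) (hD : 1 ≤ D)
    (F Finv : EuclideanSpace ℝ (Fin D) → EuclideanSpace ℝ (Fin D))
    (hF : ContDiff ℝ 2 F) (hFinv : ContDiff ℝ 2 Finv)
    (hleft : ∀ x, Finv (F x) = x) (hright : ∀ y, F (Finv y) = y)
    (ρ₀ : EuclideanSpace ℝ (Fin D) → ℝ) (hρ₀pos : ∀ x, 0 ≤ ρ₀ x)
    (hρ₀ : ContDiff ℝ 1 ρ₀) (hρ₀supp : HasCompactSupport ρ₀)
    (χ : EuclideanSpace ℝ (Fin D) → EuclideanSpace ℝ (Fin D)) (hχ : ContDiff ℝ 1 χ)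
    (ρ₁ : EuclideanSpace ℝ (Fin D) → ℝ)
    (hρ₁ : ∀ y, ρ₁ y =
      ρ₀ (Finv y) / |LinearMap.det (fderiv ℝ F (Finv y) :
        EuclideanSpace ℝ (Fin D) →ₗ[ℝ] EuclideanSpace ℝ (Fin D))|)
    (f : EuclideanSpace ℝ (Fin D) → ℝ) (hf : ContDiff ℝ 1 f) :
    HasDerivAt (fun ε : ℝ => ∫ x, f (F x + ε • χ x) * ρ₀ x)
      (-∫ y, f y * divergence D (fun z => ρ₁ z • χ (Finv z)) y) 0 ∧
    ∀ U : Set (EuclideanSpace ℝ (Fin D)), IsOpen U → (∀ y ∈ U, ρ₁ y = 0) →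
      ∀ y ∈ U, divergence D (fun z => ρ₁ z • χ (Finv z)) y = 0 :=
  statement5_general D F Finv hF hFinv hleft hright ρ₀ hρ₀ hρ₀supp χ hχ ρ₁ hρ₁ f hf
end

section
/- (Score transformation under a diffeomorphism.) Let F : ℝ^D → ℝ^D be a C² diffeomorphism and let ρ : ℝ^D → (0, ∞) be a positive C¹ density. Define the pushforward density ρ̃(y) := ρ(F⁻¹(y)) / |det DF(F⁻¹(y))|. Then ρ̃ is a positive C¹ function, and for every x ∈ ℝ^D the scores s := ∇ log ρ and s̃ := ∇ log ρ̃ satisfy DF(x)ᵀ · s̃(F(x)) = s(x) − w(x), where w(x) ∈ ℝ^D is the vector with components w(x)_j = tr( DF(x)⁻¹ · ∂_j DF(x) ). -/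
open Matrix

/-- The Jacobian matrix of `F : ℝ^D → ℝ^D` at `x`: entry `(i, j)` is `∂_j F_i (x)`. -/
noncomputable def jacMatrix (D : ℕ)
    (F : EuclideanSpace ℝ (Fin D) → EuclideanSpace ℝ (Fin D))
    (x : EuclideanSpace ℝ (Fin D)) : Matrix (Fin D) (Fin D) ℝ :=
  Matrix.of fun i j => fderiv ℝ (fun y => F y i) x (EuclideanSpace.single j 1)

/-- The entrywise partial derivative, in the `j`-th coordinate direction, of a matrix-valued
function on `ℝ^D`. -/
noncomputable def pderivMatrix (D : ℕ)
    (A : EuclideanSpace ℝ (Fin D) → Matrix (Fin D) (Fin D) ℝ) (j : Fin D)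
    (x : EuclideanSpace ℝ (Fin D)) : Matrix (Fin D) (Fin D) ℝ :=
  Matrix.of fun a b => fderiv ℝ (fun y => A y a b) x (EuclideanSpace.single j 1)

/-!
Taking logarithms, `log ρ̃ ∘ F = log ρ - log (det DF)`, since `Real.log |t| = Real.log t`
(so the sign of `det DF` never matters).
Differentiating in the direction `e_j`, the chain rule turns the left side into
`(DF(x)ᵀ s̃(F x))_j`, while Jacobi's formula `d (det A) = tr (adj A · dA)` turns the last term
into `tr (DF(x)⁻¹ ∂_j DF(x))`.
-/

theorem Matrix.det_updateRow_eq_sum_adjugate {n R : Type*} [Fintype n] [DecidableEq n]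
    [CommRing R] (A : Matrix n n R) (i : n) (b : n → R) :
    (A.updateRow i b).det = ∑ k, A.adjugate k i * b k := by
  rw [← cramer_transpose_apply, cramer_eq_adjugate_mulVec, ← adjugate_transpose]
  simp [mulVec, dotProduct]

section DetCalculus

variable {n : Type*} [Fintype n] [DecidableEq n]
  {E : Type*} [NormedAddCommGroup E] [NormedSpace ℝ E] {A : E → Matrix n n ℝ} {x : E}

variable (n) in
noncomputable def Matrix.detRowContinuousMultilinear :
    ContinuousMultilinearMap ℝ (fun _ : n => n → ℝ) ℝ where
  toMultilinearMap := (detRowAlternating (n := n) (R := ℝ)).toMultilinearMap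
  cont := continuous_id.matrix_det

theorem ContDiff.matrix_det {k : WithTop ℕ∞} (h : ∀ a b, ContDiff ℝ k fun y => A y a b) :
    ContDiff ℝ k fun y => (A y).det :=
  (detRowContinuousMultilinear n).contDiff.comp (contDiff_pi.2 fun a => contDiff_pi.2 (h a))

theorem Matrix.hasFDerivAt_det {A' : n → n → E →L[ℝ] ℝ}
    (h : ∀ a b, HasFDerivAt (fun y => A y a b) (A' a b) x) :
    HasFDerivAt (fun y => (A y).det) (∑ a, ∑ b, (A x).adjugate b a • A' a b) x := by
  have hrows : HasFDerivAt (fun y a b => A y a b)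
      (.pi fun a => .pi fun b => A' a b) x :=
    hasFDerivAt_pi.2 fun a => hasFDerivAt_pi.2 (h a)
  refine (((detRowContinuousMultilinear n).hasFDerivAt _).comp x hrows).congr_fderiv ?_
  ext v
  simp only [ContinuousLinearMap.comp_apply, ContinuousMultilinearMap.linearDeriv_apply,
    _root_.sum_apply, _root_.smul_apply, smul_eq_mul]
  exact Finset.sum_congr rfl fun a _ => det_updateRow_eq_sum_adjugate (A x) a _

theorem Matrix.fderiv_log_det_apply (h : ∀ a b, DifferentiableAt ℝ (fun y => A y a b) x)
    (hdet : (A x).det ≠ 0) (v : E) :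
    fderiv ℝ (fun y => Real.log (A y).det) x v
      = trace ((A x)⁻¹ * of fun a b => fderiv ℝ (fun y => A y a b) x v) := by
  rw [((hasFDerivAt_det fun a b => (h a b).hasFDerivAt).log hdet).fderiv]
  simp only [_root_.smul_apply, _root_.sum_apply, smul_eq_mul, Finset.mul_sum, trace, inv_def,
    Ring.inverse_eq_inv', Algebra.smul_mul_assoc, diag_apply, smul_apply, mul_apply, of_apply]
  exact Finset.sum_comm

end DetCalculus

theorem gradient_apply_eq_fderiv_single {ι : Type*} [Fintype ι] [DecidableEq ι]
    (f : EuclideanSpace ℝ ι → ℝ) (x : EuclideanSpace ℝ ι) (i : ι) :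
    gradient f x i = fderiv ℝ f x (EuclideanSpace.single i 1) := by
  rw [← inner_gradient_left, EuclideanSpace.inner_single_right]
  simp

section Jacobian

variable {D : ℕ} {F : EuclideanSpace ℝ (Fin D) → EuclideanSpace ℝ (Fin D)}
  {x : EuclideanSpace ℝ (Fin D)}

theorem jacMatrix_apply (hF : DifferentiableAt ℝ F x) (i j : Fin D) :
    jacMatrix D F x i j = fderiv ℝ F x (EuclideanSpace.single j 1) i := by
  have hFi : HasFDerivAt (fun y => F y i)
      ((EuclideanSpace.proj (𝕜 := ℝ) i).comp (fderiv ℝ F x)) x :=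
    (EuclideanSpace.proj (𝕜 := ℝ) i).hasFDerivAt.comp x hF.hasFDerivAt
  rw [jacMatrix, of_apply, hFi.fderiv]
  rfl

theorem jacMatrix_eq_toMatrix (hF : DifferentiableAt ℝ F x) :
    jacMatrix D F x = LinearMap.toMatrix (EuclideanSpace.basisFun (Fin D) ℝ).toBasis
      (EuclideanSpace.basisFun (Fin D) ℝ).toBasis (fderiv ℝ F x) := by
  ext i j
  simp [jacMatrix_apply hF, LinearMap.toMatrix_apply]

theorem det_jacMatrix_ne_zero_of_leftInverse
    {G : EuclideanSpace ℝ (Fin D) → EuclideanSpace ℝ (Fin D)} (hF : DifferentiableAt ℝ F x)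
    (hG : DifferentiableAt ℝ G (F x))
    (hGF : Function.LeftInverse G F) :
    (jacMatrix D F x).det ≠ 0 := by
  have hcomp : (fderiv ℝ G (F x)).comp (fderiv ℝ F x) = ContinuousLinearMap.id ℝ _ := by
    rw [← fderiv_comp x hG hF, hGF.comp_eq_id, fderiv_id]
  have hdet := congrArg (fun L : EuclideanSpace ℝ (Fin D) →L[ℝ] EuclideanSpace ℝ (Fin D) =>
    LinearMap.det L.toLinearMap) hcomp
  rw [jacMatrix_eq_toMatrix hF, LinearMap.det_toMatrix]
  intro h0
  simp [LinearMap.det_comp, h0] at hdet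

theorem contDiff_jacMatrix_apply {m n : WithTop ℕ∞} (hF : ContDiff ℝ n F) (hmn : m + 1 ≤ n)
    (i j : Fin D) : ContDiff ℝ m fun x => jacMatrix D F x i j := by
  have hFi : ContDiff ℝ n fun y => F y i := (EuclideanSpace.proj (𝕜 := ℝ) i).contDiff.comp hF
  exact (ContinuousLinearMap.apply ℝ ℝ (EuclideanSpace.single j 1)).contDiff.comp
    (hFi.fderiv_right hmn)

theorem jacMatrix_transpose_mulVec_gradient {f : EuclideanSpace ℝ (Fin D) → ℝ}
    (hf : DifferentiableAt ℝ f (F x)) (hF : DifferentiableAt ℝ F x) :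
    (jacMatrix D F x)ᵀ *ᵥ (fun i => gradient f (F x) i)
      = fun j => fderiv ℝ (f ∘ F) x (EuclideanSpace.single j 1) := by
  ext j
  rw [fderiv_comp x hf hF, ContinuousLinearMap.comp_apply, ← inner_gradient_left]
  simp only [mulVec, dotProduct, transpose_apply, jacMatrix_apply hF, PiLp.inner_apply]
  simp [mul_comm]

end Jacobian

theorem statement7_general (D : ℕ)
    (F Finv : EuclideanSpace ℝ (Fin D) → EuclideanSpace ℝ (Fin D))
    (hF : ContDiff ℝ 2 F) (hFinv : ContDiff ℝ 2 Finv)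
    (hleft : ∀ x, Finv (F x) = x)
    (ρ : EuclideanSpace ℝ (Fin D) → ℝ) (hρpos : ∀ x, 0 < ρ x) (hρ : ContDiff ℝ 1 ρ)
    (ρTilde : EuclideanSpace ℝ (Fin D) → ℝ)
    (hρTilde : ∀ y, ρTilde y = ρ (Finv y) / |(jacMatrix D F (Finv y)).det|) :
    (∀ y, 0 < ρTilde y) ∧ ContDiff ℝ 1 ρTilde ∧
    ∀ x : EuclideanSpace ℝ (Fin D),
      Matrix.mulVec (jacMatrix D F x)ᵀ
          (fun i => gradient (fun y => Real.log (ρTilde y)) (F x) i)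
        = fun j => gradient (fun y => Real.log (ρ y)) x j
            - Matrix.trace ((jacMatrix D F x)⁻¹ * pderivMatrix D (jacMatrix D F) j x) := by
  have hFd : Differentiable ℝ F := hF.differentiable (by norm_num)
  have hFinv1 : ContDiff ℝ 1 Finv := hFinv.of_le (by norm_num)
  have hJ : ∀ x, (jacMatrix D F x).det ≠ 0 := fun x =>
    det_jacMatrix_ne_zero_of_leftInverse (hFd x) (hFinv1.differentiable one_ne_zero _) hleft
  have hJC : ∀ a b, ContDiff ℝ 1 fun x => jacMatrix D F x a b :=
    contDiff_jacMatrix_apply hF (by norm_num)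
  have hdetJ : ContDiff ℝ 1 fun x => (jacMatrix D F x).det := ContDiff.matrix_det hJC
  have hpos : ∀ y, 0 < ρTilde y := fun y => by
    rw [hρTilde]; exact div_pos (hρpos _) (abs_pos.2 (hJ _))
  have hC : ContDiff ℝ 1 ρTilde := by
    rw [funext hρTilde, contDiff_iff_contDiffAt]
    exact fun y => (hρ.comp hFinv1).contDiffAt.div
      ((hdetJ.comp hFinv1).contDiffAt.abs (hJ _)) (abs_ne_zero.2 (hJ _))
  have hlog : (fun y => Real.log (ρTilde y)) ∘ F
      = fun x => Real.log (ρ x) - Real.log (jacMatrix D F x).det := by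
    funext x
    rw [Function.comp_apply, hρTilde, hleft, Real.log_div (hρpos x).ne' (abs_ne_zero.2 (hJ x)),
      Real.log_abs]
  refine ⟨hpos, hC, fun x => ?_⟩
  have hlogρ : DifferentiableAt ℝ (fun x => Real.log (ρ x)) x :=
    (hρ.differentiable one_ne_zero x).log (hρpos x).ne'
  have hlogdet : DifferentiableAt ℝ (fun x => Real.log (jacMatrix D F x).det) x :=
    (hdetJ.differentiable one_ne_zero x).log (hJ x)
  rw [jacMatrix_transpose_mulVec_gradient ((hC.differentiable one_ne_zero _).log (hpos _).ne')
    (hFd x), hlog]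
  funext j
  rw [fderiv_fun_sub hlogρ hlogdet, _root_.sub_apply, gradient_apply_eq_fderiv_single,
    fderiv_log_det_apply (fun a b => (hJC a b).differentiable one_ne_zero x) (hJ x)]
  rfl

/-- **Score transformation under a diffeomorphism.** Let `F` be a C²
diffeomorphism of `ℝ^D` (with inverse `Finv`) and `ρ` a positive C¹ density. Then the
pushforward density `ρ̃(y) = ρ(F⁻¹ y)/|det DF(F⁻¹ y)|` is positive and C¹, and the scores
`s = ∇ log ρ`, `s̃ = ∇ log ρ̃` satisfy `DF(x)ᵀ s̃(F(x)) = s(x) − w(x)`, where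
`w(x)_j = tr(DF(x)⁻¹ ∂_j DF(x))`. -/
theorem statement7 (D : ℕ) (hD : 1 ≤ D)
    (F Finv : EuclideanSpace ℝ (Fin D) → EuclideanSpace ℝ (Fin D))
    (hF : ContDiff ℝ 2 F) (hFinv : ContDiff ℝ 2 Finv)
    (hleft : ∀ x, Finv (F x) = x) (hright : ∀ y, F (Finv y) = y)
    (ρ : EuclideanSpace ℝ (Fin D) → ℝ) (hρpos : ∀ x, 0 < ρ x) (hρ : ContDiff ℝ 1 ρ)
    (ρTilde : EuclideanSpace ℝ (Fin D) → ℝ)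
    (hρTilde : ∀ y, ρTilde y = ρ (Finv y) / |(jacMatrix D F (Finv y)).det|) :
    (∀ y, 0 < ρTilde y) ∧ ContDiff ℝ 1 ρTilde ∧
    ∀ x : EuclideanSpace ℝ (Fin D),
      Matrix.mulVec (jacMatrix D F x)ᵀ
          (fun i => gradient (fun y => Real.log (ρTilde y)) (F x) i)
        = fun j => gradient (fun y => Real.log (ρ y)) x j
            - Matrix.trace ((jacMatrix D F x)⁻¹ * pderivMatrix D (jacMatrix D F) j x) :=
  statement7_general D F Finv hF hFinv hleft ρ hρpos hρ ρTilde hρTilde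
end

section
/- (Core estimate in the proof of the alignment theorem.) Let d, τ, t* ∈ ℕ with t* ≤ τ, let δ ∈ (0,1), Δt > 0 and c, c₁, B ≥ 0. Let R_0, …, R_{τ−1} be invertible real d × d matrices, w_0, …, w_{τ−1} ∈ ℝ^{1×d}, and define p_0 := 0, p_{t+1} := (p_t − w_t) R_t⁻¹. Assume: (a) for every t < t*, ‖w_t‖ ≤ c·Δt and ‖(R_{τ−1} ⋯ R_t)⁻¹‖ ≤ B, where ‖·‖ on matrices is the operator norm; and (b) for every t with t* ≤ t < τ, ‖w_t (R_{τ−1} ⋯ R_t)⁻¹‖ ≤ c₁ · Δt · δ^{1/(τ−t)} · (1+δ)^{t−τ}. Then ‖p_τ‖ ≤ Δt · ( c · t* · B + c₁ / δ ). -/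
/-! The recursion unrolls to `p_τ = -∑_{t<τ} w_t (R_{τ-1} ⋯ R_t)⁻¹`. Split the sum at `t*`:
the first `t*` terms are each at most `c Δt B`, and by (b), since `δ^{1/(τ-t)} ≤ 1`, the remaining
ones are dominated by `c₁ Δt (1+δ)^{-(τ-t)}`, a geometric series summing to at most `c₁ Δt / δ`. -/

open scoped Matrix.Norms.L2Operator

/-- The decreasing-index product `R_{τ-1} · R_{τ-2} ⋯ R_t` of matrices
(the identity when `t ≥ τ`). -/
noncomputable def revProd (d : ℕ) (R : ℕ → Matrix (Fin d) (Fin d) ℝ) (τ t : ℕ) :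
    Matrix (Fin d) (Fin d) ℝ :=
  ((List.range (τ - t)).map fun k => R (τ - 1 - k)).prod

open Finset

section revProd

variable {d : ℕ} (R : ℕ → Matrix (Fin d) (Fin d) ℝ)

lemma revProd_self (s : ℕ) : revProd d R s s = 1 := by
  simp [revProd]

lemma revProd_succ_left {s t : ℕ} (hts : t ≤ s) :
    revProd d R (s + 1) t = R s * revProd d R s t := by
  unfold revProd
  rw [show s + 1 - t = (s - t) + 1 by omega, List.range_succ_eq_map, List.map_cons,
    List.map_map, List.prod_cons]
  congr 2
  refine List.map_congr_left fun k _ => ?_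
  simp only [Function.comp_apply]
  congr 1
  omega

lemma eq_neg_sum_mul_inv_revProd {ι : Type*} [Fintype ι] {τ : ℕ}
    {w p : ℕ → Matrix ι (Fin d) ℝ} (hp0 : p 0 = 0)
    (hpstep : ∀ t < τ, p (t + 1) = (p t - w t) * (R t)⁻¹) :
    ∀ s ≤ τ, p s = -∑ t ∈ range s, w t * (revProd d R s t)⁻¹
  | 0, _ => by simp [hp0]
  | s + 1, hs => by
    have hsum : ∑ t ∈ range s, w t * (revProd d R (s + 1) t)⁻¹ =
        (∑ t ∈ range s, w t * (revProd d R s t)⁻¹) * (R s)⁻¹ := by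
      rw [Matrix.sum_mul]
      refine sum_congr rfl fun t ht => ?_
      rw [revProd_succ_left R (mem_range.mp ht).le, Matrix.mul_inv_rev, Matrix.mul_assoc]
    rw [hpstep s hs, eq_neg_sum_mul_inv_revProd hp0 hpstep s (by omega), sum_range_succ, hsum,
      revProd_succ_left R le_rfl, revProd_self, Matrix.mul_one,
      Matrix.sub_mul, Matrix.neg_mul, neg_add']

end revProd

lemma rpow_natCast_sub_natCast {x : ℝ} (hx : 0 ≤ x) {t τ : ℕ} (h : t ≤ τ) :
    x ^ ((t : ℝ) - τ) = x⁻¹ ^ (τ - t) := by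
  rw [inv_pow, ← Real.rpow_natCast, ← Real.rpow_neg hx, Nat.cast_sub h, neg_sub]

lemma rpow_one_div_sub_mul_one_add_rpow_sub_le {δ : ℝ} (hδ0 : 0 ≤ δ) (hδ1 : δ ≤ 1) {t τ : ℕ}
    (h : t ≤ τ) :
    δ ^ ((1 : ℝ) / ((τ : ℝ) - t)) * (1 + δ) ^ ((t : ℝ) - τ) ≤ (1 + δ)⁻¹ ^ (τ - t) := by
  have hroot : δ ^ ((1 : ℝ) / ((τ : ℝ) - t)) ≤ 1 :=
    Real.rpow_le_one hδ0 hδ1 (div_nonneg zero_le_one (sub_nonneg.mpr (by exact_mod_cast h)))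
  rw [rpow_natCast_sub_natCast (by positivity) h]
  exact mul_le_of_le_one_left (by positivity) hroot

lemma sum_Ico_inv_one_add_pow_sub_le {δ : ℝ} (hδ : 0 < δ) (a τ : ℕ) :
    ∑ t ∈ Ico a τ, (1 + δ)⁻¹ ^ (τ - t) ≤ 1 / δ := by
  have hr : (1 + δ)⁻¹ < 1 := inv_lt_one_of_one_lt₀ (by linarith)
  calc ∑ t ∈ Ico a τ, (1 + δ)⁻¹ ^ (τ - t)
      = ∑ j ∈ Ico 1 (τ + 1 - a), (1 + δ)⁻¹ ^ j := by
        rw [sum_Ico_reflect _ a (Nat.le_succ τ), Nat.add_sub_cancel_left]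
    _ ≤ (1 + δ)⁻¹ ^ 1 / (1 - (1 + δ)⁻¹) := geom_sum_Ico_le_of_lt_one (by positivity) hr
    _ = 1 / δ := by
        field_simp [hδ.ne']
        ring

theorem statement11_general (d τ tstar : ℕ) (htstar : tstar ≤ τ)
    (δ : ℝ) (hδ0 : 0 < δ) (hδ1 : δ < 1) (Δt : ℝ) (hΔt : 0 < Δt)
    (c c₁ B : ℝ) (hc₁ : 0 ≤ c₁)
    (R : ℕ → Matrix (Fin d) (Fin d) ℝ)
    (w : ℕ → Matrix (Fin 1) (Fin d) ℝ)
    (p : ℕ → Matrix (Fin 1) (Fin d) ℝ)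
    (hp0 : p 0 = 0)
    (hpstep : ∀ t < τ, p (t + 1) = (p t - w t) * (R t)⁻¹)
    (ha : ∀ t < tstar, ‖w t‖ ≤ c * Δt ∧ ‖(revProd d R τ t)⁻¹‖ ≤ B)
    (hb : ∀ t, tstar ≤ t → t < τ →
      ‖w t * (revProd d R τ t)⁻¹‖
        ≤ c₁ * Δt * δ ^ ((1 : ℝ) / ((τ : ℝ) - (t : ℝ))) * (1 + δ) ^ ((t : ℝ) - (τ : ℝ))) :
    ‖p τ‖ ≤ Δt * (c * tstar * B + c₁ / δ) := by
  set q := fun t => w t * (revProd d R τ t)⁻¹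
  have early : ‖∑ t ∈ range tstar, q t‖ ≤ tstar * (c * Δt * B) := by
    refine (norm_sum_le_of_le _ fun t ht => ?_).trans_eq
      (by rw [sum_const, card_range, nsmul_eq_mul])
    obtain ⟨hw, hinv⟩ := ha t (mem_range.mp ht)
    exact (Matrix.l2_opNorm_mul _ _).trans
      (mul_le_mul hw hinv (norm_nonneg _) ((norm_nonneg _).trans hw))
  have late : ‖∑ t ∈ Ico tstar τ, q t‖ ≤ c₁ * Δt * (1 / δ) := by
    refine (norm_sum_le_of_le (n := fun t => c₁ * Δt * (1 + δ)⁻¹ ^ (τ - t)) _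
      fun t ht => ?_).trans ?_
    · obtain ⟨htl, htu⟩ := mem_Ico.mp ht
      refine (hb t htl htu).trans ?_
      rw [mul_assoc]
      exact mul_le_mul_of_nonneg_left
        (rpow_one_div_sub_mul_one_add_rpow_sub_le hδ0.le hδ1.le htu.le) (by positivity)
    · rw [← mul_sum]
      exact mul_le_mul_of_nonneg_left (sum_Ico_inv_one_add_pow_sub_le hδ0 tstar τ) (by positivity)
  calc ‖p τ‖ = ‖∑ t ∈ range tstar, q t + ∑ t ∈ Ico tstar τ, q t‖ := by
        rw [eq_neg_sum_mul_inv_revProd R hp0 hpstep τ le_rfl, norm_neg,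
          sum_range_add_sum_Ico _ htstar]
    _ ≤ tstar * (c * Δt * B) + c₁ * Δt * (1 / δ) :=
        (norm_add_le _ _).trans (add_le_add early late)
    _ = Δt * (c * tstar * B + c₁ / δ) := by ring

/-- **Core estimate in the proof of the alignment theorem.** Row vectors are
modeled as `1 × d` matrices, and all norms are the operator norms induced by the Euclidean
norm. Under the recursion `p_0 = 0`, `p_{t+1} = (p_t − w_t) R_t⁻¹`, and the bounds
(a) `‖w_t‖ ≤ c Δt` and `‖(R_{τ-1} ⋯ R_t)⁻¹‖ ≤ B` for `t < t*`, and
(b) `‖w_t (R_{τ-1} ⋯ R_t)⁻¹‖ ≤ c₁ Δt δ^{1/(τ−t)} (1+δ)^{t−τ}` for `t* ≤ t < τ`,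
one has `‖p_τ‖ ≤ Δt (c t* B + c₁/δ)`. -/
theorem statement11 (d τ tstar : ℕ) (htstar : tstar ≤ τ)
    (δ : ℝ) (hδ0 : 0 < δ) (hδ1 : δ < 1) (Δt : ℝ) (hΔt : 0 < Δt)
    (c c₁ B : ℝ) (hc : 0 ≤ c) (hc₁ : 0 ≤ c₁) (hB : 0 ≤ B)
    (R : ℕ → Matrix (Fin d) (Fin d) ℝ) (hR : ∀ t < τ, IsUnit (R t).det)
    (w : ℕ → Matrix (Fin 1) (Fin d) ℝ)
    (p : ℕ → Matrix (Fin 1) (Fin d) ℝ)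
    (hp0 : p 0 = 0)
    (hpstep : ∀ t < τ, p (t + 1) = (p t - w t) * (R t)⁻¹)
    (ha : ∀ t < tstar, ‖w t‖ ≤ c * Δt ∧ ‖(revProd d R τ t)⁻¹‖ ≤ B)
    (hb : ∀ t, tstar ≤ t → t < τ →
      ‖w t * (revProd d R τ t)⁻¹‖
        ≤ c₁ * Δt * δ ^ ((1 : ℝ) / ((τ : ℝ) - (t : ℝ))) * (1 + δ) ^ ((t : ℝ) - (τ : ℝ))) :
    ‖p τ‖ ≤ Δt * (c * tstar * B + c₁ / δ) :=
  statement11_general d τ tstar htstar δ hδ0 hδ1 Δt hΔt c c₁ B hc₁ R w p hp0 hpstep ha hb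
end
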